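/- arXiv:1905.00762 — 6 statements merged into one kernel-verified Lean document; each statement's English description precedes it below -/
import Mathlib

section
/- Let m ≠ 0 be a real constant and let g₃ be the metric on ℝ³ with coordinates (τ,x,y) whose components are g₃ = diag(−e^{mτ}, e^{mτ}, 1). Then the vector field Y₁ with components Y₁ = ((2/m)e^{−(m/2)(τ−x)}, −(2/m)e^{−(m/2)(τ−x)}, 0) is a Killing vector of g₃, i.e. the conformal Killing equation holds with conformal factor ψ ≡ 0. -/
open Real

/-- Partial derivative of a scalar function on `ℝⁿ` with respect to the `c`-th coordinate. -/
noncomputable def pd {n : ℕ} (f : (Fin n → ℝ) → ℝ) (c : Fin n) (p : Fin n → ℝ) : ℝ :=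
  fderiv ℝ f p (Pi.single c 1)

lemma pd_const {n : ℕ} (k : ℝ) (c : Fin n) (p : Fin n → ℝ) :
    pd (fun _ => k) c p = 0 := by
  simp [pd]

lemma pd_gen (k c₀ c₁ : ℝ) (j : Fin 3) (p : Fin 3 → ℝ) :
    pd (fun q => k * Real.exp (c₀ * q 0 + c₁ * q 1)) j p
      = k * Real.exp (c₀ * p 0 + c₁ * p 1)
          * (c₀ * (Pi.single j (1:ℝ) : Fin 3 → ℝ) 0 + c₁ * (Pi.single j (1:ℝ) : Fin 3 → ℝ) 1) := by
  have hL : HasFDerivAt (fun q : Fin 3 → ℝ => c₀ * q 0 + c₁ * q 1)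
      (c₀ • (ContinuousLinearMap.proj 0 : (Fin 3 → ℝ) →L[ℝ] ℝ)
        + c₁ • (ContinuousLinearMap.proj 1 : (Fin 3 → ℝ) →L[ℝ] ℝ)) p := by
    have h0 := (ContinuousLinearMap.proj (R := ℝ) (φ := fun _ : Fin 3 => ℝ) 0).hasFDerivAt (x := p)
    have h1 := (ContinuousLinearMap.proj (R := ℝ) (φ := fun _ : Fin 3 => ℝ) 1).hasFDerivAt (x := p)
    exact (h0.const_mul c₀).add (h1.const_mul c₁)
  have h := ((hL.exp).const_mul k).fderiv
  simp only [pd, h]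
  simp [mul_comm, mul_assoc, mul_left_comm]
  ring

lemma pd_gA (m : ℝ) (j : Fin 3) (p : Fin 3 → ℝ) :
    pd (fun q : Fin 3 → ℝ => -Real.exp (m * q 0)) j p
      = -(m * Real.exp (m * p 0)) * (Pi.single j (1:ℝ) : Fin 3 → ℝ) 0 := by
  have e : (fun q : Fin 3 → ℝ => -Real.exp (m * q 0))
      = fun q => (-1 : ℝ) * Real.exp (m * q 0 + 0 * q 1) := by
    funext q; rw [zero_mul, add_zero]; ring
  rw [show pd (fun q : Fin 3 → ℝ => -Real.exp (m * q 0)) j p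
      = pd (fun q => (-1 : ℝ) * Real.exp (m * q 0 + 0 * q 1)) j p from by rw [← e],
    pd_gen]
  rw [zero_mul, add_zero, zero_mul, add_zero]; ring

lemma pd_gB (m : ℝ) (j : Fin 3) (p : Fin 3 → ℝ) :
    pd (fun q : Fin 3 → ℝ => Real.exp (m * q 0)) j p
      = m * Real.exp (m * p 0) * (Pi.single j (1:ℝ) : Fin 3 → ℝ) 0 := by
  have e : (fun q : Fin 3 → ℝ => Real.exp (m * q 0))
      = fun q => (1 : ℝ) * Real.exp (m * q 0 + 0 * q 1) := by
    funext q; rw [zero_mul, add_zero]; ring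
  rw [show pd (fun q : Fin 3 → ℝ => Real.exp (m * q 0)) j p
      = pd (fun q => (1 : ℝ) * Real.exp (m * q 0 + 0 * q 1)) j p from by rw [← e],
    pd_gen]
  rw [zero_mul, add_zero, zero_mul, add_zero]; ring

lemma pd_XA (m : ℝ) (j : Fin 3) (p : Fin 3 → ℝ) :
    pd (fun q : Fin 3 → ℝ => 2 / m * Real.exp (-(m / 2) * (q 0 - q 1))) j p
      = 2 / m * Real.exp (-(m / 2) * (p 0 - p 1))
          * (-(m / 2) * (Pi.single j (1:ℝ) : Fin 3 → ℝ) 0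
            + m / 2 * (Pi.single j (1:ℝ) : Fin 3 → ℝ) 1) := by
  have e : (fun q : Fin 3 → ℝ => 2 / m * Real.exp (-(m / 2) * (q 0 - q 1)))
      = fun q => (2 / m : ℝ) * Real.exp (-(m / 2) * q 0 + m / 2 * q 1) := by
    funext q; have : -(m / 2) * (q 0 - q 1) = -(m / 2) * q 0 + m / 2 * q 1 := by ring
    rw [this]
  rw [show pd (fun q : Fin 3 → ℝ => 2 / m * Real.exp (-(m / 2) * (q 0 - q 1))) j p
      = pd (fun q => (2 / m : ℝ) * Real.exp (-(m / 2) * q 0 + m / 2 * q 1)) j p from by rw [← e],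
    pd_gen]
  have : -(m / 2) * (p 0 - p 1) = -(m / 2) * p 0 + m / 2 * p 1 := by ring
  rw [this]

lemma pd_XB (m : ℝ) (j : Fin 3) (p : Fin 3 → ℝ) :
    pd (fun q : Fin 3 → ℝ => -(2 / m * Real.exp (-(m / 2) * (q 0 - q 1)))) j p
      = -(2 / m * Real.exp (-(m / 2) * (p 0 - p 1))
          * (-(m / 2) * (Pi.single j (1:ℝ) : Fin 3 → ℝ) 0
            + m / 2 * (Pi.single j (1:ℝ) : Fin 3 → ℝ) 1)) := by
  have e : (fun q : Fin 3 → ℝ => -(2 / m * Real.exp (-(m / 2) * (q 0 - q 1))))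
      = fun q => (-(2 / m) : ℝ) * Real.exp (-(m / 2) * q 0 + m / 2 * q 1) := by
    funext q; have : -(m / 2) * (q 0 - q 1) = -(m / 2) * q 0 + m / 2 * q 1 := by ring
    rw [this]; ring
  rw [show pd (fun q : Fin 3 → ℝ => -(2 / m * Real.exp (-(m / 2) * (q 0 - q 1)))) j p
      = pd (fun q => (-(2 / m) : ℝ) * Real.exp (-(m / 2) * q 0 + m / 2 * q 1)) j p from by rw [← e],
    pd_gen]
  have : -(m / 2) * (p 0 - p 1) = -(m / 2) * p 0 + m / 2 * p 1 := by ring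
  rw [this]; ring

/-- `X` is a conformal Killing vector of the metric `g` with conformal factor `ψ`:
for all indices `a b` and all points `p`,
`Σ_c [X^c ∂_c g_{ab} + g_{cb} ∂_a X^c + g_{ac} ∂_b X^c] = 2 ψ g_{ab}`. -/
def IsCKV {n : ℕ} (g : (Fin n → ℝ) → Matrix (Fin n) (Fin n) ℝ)
    (X : (Fin n → ℝ) → (Fin n → ℝ)) (ψ : (Fin n → ℝ) → ℝ) : Prop :=
  ∀ (a b : Fin n) (p : Fin n → ℝ),
    (∑ c, (X p c * pd (fun q => g q a b) c p
      + g p c b * pd (fun q => X q c) a p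
      + g p a c * pd (fun q => X q c) b p)) = 2 * ψ p * g p a b

/-- `Y₁` is a Killing vector of `g₃ = diag(−e^{mτ}, e^{mτ}, 1)`. -/
theorem Y1_is_KV (m : ℝ) (hm : m ≠ 0) :
    IsCKV
      (fun p : Fin 3 → ℝ =>
        Matrix.diagonal ![-Real.exp (m * p 0), Real.exp (m * p 0), 1])
      (fun p : Fin 3 → ℝ =>
        ![(2 / m) * Real.exp (-(m / 2) * (p 0 - p 1)),
          -((2 / m) * Real.exp (-(m / 2) * (p 0 - p 1))), 0])
      (fun _ => 0) := by
  intro a b p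
  fin_cases a <;> fin_cases b <;>
    simp only [Fin.sum_univ_three, Matrix.diagonal_apply, Matrix.cons_val_zero,
      Matrix.cons_val_one, Matrix.head_cons, Matrix.cons_val_two, Matrix.tail_cons,
      Fin.isValue, Fin.reduceFinMk, Fin.reduceEq, reduceIte] <;>
    simp only [pd_gA, pd_gB, pd_XA, pd_XB, pd_const] <;>
    simp [Pi.single_apply] <;>
    ring
end

section
/- Let m ≠ 0 be a real constant and let g₃ be the metric on ℝ³ with coordinates (τ,x,y) whose components are g₃ = diag(−e^{mτ}, e^{mτ}, 1). Then the vector field Y₆ with components Y₆ = (−y e^{−(m/2)(τ−x)}, y e^{−(m/2)(τ−x)}, −(2/m)e^{(m/2)(τ+x)}) is a Killing vector of g₃. -/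
open Real

noncomputable abbrev prj (i : Fin 3) : (Fin 3 → ℝ) →L[ℝ] ℝ := ContinuousLinearMap.proj i

lemma pd_of_hasFDerivAt {n : ℕ} {f : (Fin n → ℝ) → ℝ} {L : (Fin n → ℝ) →L[ℝ] ℝ}
    {p : Fin n → ℝ} (h : HasFDerivAt f L p) (c : Fin n) :
    pd f c p = L (Pi.single c 1) := by rw [pd, h.fderiv]

lemma pd_exp (m : ℝ) (c : Fin 3) (p : Fin 3 → ℝ) :
    pd (fun q => Real.exp (m * q 0)) c p
      = ![m * Real.exp (m * p 0), 0, 0] c := by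
  have h0 : HasFDerivAt (fun q : Fin 3 → ℝ => q 0)
      (prj 0) p := hasFDerivAt_apply 0 p
  have h : HasFDerivAt (fun q : Fin 3 → ℝ => Real.exp (m * q 0))
      (Real.exp (m * p 0) • (m • prj 0)) p :=
    (h0.const_mul m).exp
  rw [pd_of_hasFDerivAt h]
  fin_cases c <;>
    simp [ContinuousLinearMap.proj_apply, Pi.single_apply] <;> ring

lemma pd_neg_exp (m : ℝ) (c : Fin 3) (p : Fin 3 → ℝ) :
    pd (fun q => -Real.exp (m * q 0)) c p
      = ![-(m * Real.exp (m * p 0)), 0, 0] c := by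
  have h0 : HasFDerivAt (fun q : Fin 3 → ℝ => q 0)
      (prj 0) p := hasFDerivAt_apply 0 p
  have h : HasFDerivAt (fun q : Fin 3 → ℝ => -Real.exp (m * q 0))
      (-(Real.exp (m * p 0) • (m • prj 0))) p :=
    ((h0.const_mul m).exp).neg
  rw [pd_of_hasFDerivAt h]
  fin_cases c <;>
    simp [ContinuousLinearMap.proj_apply, Pi.single_apply] <;> ring

lemma pd_X0 (m : ℝ) (c : Fin 3) (p : Fin 3 → ℝ) :
    pd (fun q : Fin 3 → ℝ => -(q 2 * Real.exp (-(m / 2) * (q 0 - q 1)))) c p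
      = ![m / 2 * (p 2 * Real.exp (-(m / 2) * (p 0 - p 1))),
          -(m / 2) * (p 2 * Real.exp (-(m / 2) * (p 0 - p 1))),
          -Real.exp (-(m / 2) * (p 0 - p 1))] c := by
  have h0 : HasFDerivAt (fun q : Fin 3 → ℝ => q 0)
      (prj 0) p := hasFDerivAt_apply 0 p
  have h1 : HasFDerivAt (fun q : Fin 3 → ℝ => q 1)
      (prj 1) p := hasFDerivAt_apply 1 p
  have h2 : HasFDerivAt (fun q : Fin 3 → ℝ => q 2)
      (prj 2) p := hasFDerivAt_apply 2 p
  have hE : HasFDerivAt (fun q : Fin 3 → ℝ => Real.exp (-(m / 2) * (q 0 - q 1)))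
      (Real.exp (-(m / 2) * (p 0 - p 1)) •
        ((-(m / 2)) • (prj 0 - prj 1))) p :=
    ((h0.sub h1).const_mul (-(m / 2))).exp
  have h : HasFDerivAt (fun q : Fin 3 → ℝ => -(q 2 * Real.exp (-(m / 2) * (q 0 - q 1))))
      (-(p 2 • (Real.exp (-(m / 2) * (p 0 - p 1)) •
        ((-(m / 2)) • (prj 0 - prj 1)))
        + Real.exp (-(m / 2) * (p 0 - p 1)) • prj 2)) p :=
    (h2.mul hE).neg
  rw [pd_of_hasFDerivAt h]
  fin_cases c <;>
    simp [ContinuousLinearMap.proj_apply, Pi.single_apply] <;> ring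

lemma pd_X1 (m : ℝ) (c : Fin 3) (p : Fin 3 → ℝ) :
    pd (fun q : Fin 3 → ℝ => q 2 * Real.exp (-(m / 2) * (q 0 - q 1))) c p
      = ![-(m / 2) * (p 2 * Real.exp (-(m / 2) * (p 0 - p 1))),
          m / 2 * (p 2 * Real.exp (-(m / 2) * (p 0 - p 1))),
          Real.exp (-(m / 2) * (p 0 - p 1))] c := by
  have h0 : HasFDerivAt (fun q : Fin 3 → ℝ => q 0)
      (prj 0) p := hasFDerivAt_apply 0 p
  have h1 : HasFDerivAt (fun q : Fin 3 → ℝ => q 1)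
      (prj 1) p := hasFDerivAt_apply 1 p
  have h2 : HasFDerivAt (fun q : Fin 3 → ℝ => q 2)
      (prj 2) p := hasFDerivAt_apply 2 p
  have hE : HasFDerivAt (fun q : Fin 3 → ℝ => Real.exp (-(m / 2) * (q 0 - q 1)))
      (Real.exp (-(m / 2) * (p 0 - p 1)) •
        ((-(m / 2)) • (prj 0 - prj 1))) p :=
    ((h0.sub h1).const_mul (-(m / 2))).exp
  have h : HasFDerivAt (fun q : Fin 3 → ℝ => q 2 * Real.exp (-(m / 2) * (q 0 - q 1)))
      (p 2 • (Real.exp (-(m / 2) * (p 0 - p 1)) •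
        ((-(m / 2)) • (prj 0 - prj 1)))
        + Real.exp (-(m / 2) * (p 0 - p 1)) • prj 2) p :=
    h2.mul hE
  rw [pd_of_hasFDerivAt h]
  fin_cases c <;>
    simp [ContinuousLinearMap.proj_apply, Pi.single_apply] <;> ring

lemma pd_X2 (m : ℝ) (c : Fin 3) (p : Fin 3 → ℝ) :
    pd (fun q : Fin 3 → ℝ => -(2 / m * Real.exp (m / 2 * (q 0 + q 1)))) c p
      = ![-(2 / m * (m / 2) * Real.exp (m / 2 * (p 0 + p 1))),
          -(2 / m * (m / 2) * Real.exp (m / 2 * (p 0 + p 1))),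
          0] c := by
  have h0 : HasFDerivAt (fun q : Fin 3 → ℝ => q 0)
      (prj 0) p := hasFDerivAt_apply 0 p
  have h1 : HasFDerivAt (fun q : Fin 3 → ℝ => q 1)
      (prj 1) p := hasFDerivAt_apply 1 p
  have h : HasFDerivAt (fun q : Fin 3 → ℝ => -(2 / m * Real.exp (m / 2 * (q 0 + q 1))))
      (-((2 / m) • (Real.exp (m / 2 * (p 0 + p 1)) •
        ((m / 2) • (prj 0 + prj 1))))) p :=
    ((((h0.add h1).const_mul (m / 2)).exp).const_mul (2 / m)).neg
  rw [pd_of_hasFDerivAt h]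
  fin_cases c <;>
    simp [ContinuousLinearMap.proj_apply, Pi.single_apply] <;> ring

/-- `Y₆` is a Killing vector of `g₃ = diag(−e^{mτ}, e^{mτ}, 1)`. -/
theorem Y6_is_KV (m : ℝ) (hm : m ≠ 0) :
    IsCKV
      (fun p : Fin 3 → ℝ =>
        Matrix.diagonal ![-Real.exp (m * p 0), Real.exp (m * p 0), 1])
      (fun p : Fin 3 → ℝ =>
        ![-(p 2 * Real.exp (-(m / 2) * (p 0 - p 1))),
          p 2 * Real.exp (-(m / 2) * (p 0 - p 1)),
          -((2 / m) * Real.exp ((m / 2) * (p 0 + p 1)))])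
      (fun _ => 0) := by
  intro a b p
  have hE : Real.exp (m * p 0) * Real.exp (-(m / 2) * (p 0 - p 1))
      = Real.exp (m / 2 * (p 0 + p 1)) := by
    rw [← Real.exp_add]; ring_nf
  have h2m : 2 / m * (m / 2) = 1 := by field_simp
  fin_cases a <;> fin_cases b <;>
    simp only [Fin.sum_univ_three, Fin.isValue, Fin.zero_eta, Fin.mk_one,
      Matrix.diagonal_apply, Matrix.cons_val_zero, Matrix.cons_val_one,
      Matrix.head_cons, Matrix.cons_val_two, Matrix.tail_cons, Fin.reduceEq,
      if_true, if_false, ite_true, ite_false, reduceIte,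
      pd_X0, pd_X1, pd_X2, pd_exp, pd_neg_exp, pd_const] <;>
    simp [pd_const, pd_X0, pd_X1, pd_X2, pd_exp, pd_neg_exp, Fin.isValue, h2m] <;>
    first
      | ring1
      | (rw [← Real.exp_add]; ring_nf)
end

section
/- Let m ≠ 0 and λ ≠ 0 be real constants. Consider on ℝ⁴ with coordinates (τ,x,y,z) the four-dimensional decomposable metric g = diag(−e^{mλτ+2x}, e^{mλτ+2x}, e^{m(λ−1)τ+2x}, 1). Then the vector field L₁ with components (2/m, 0, y, λz) is a homothetic vector of g with constant conformal factor ψ ≡ λ. -/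
open Real

lemma pd_coord {n : ℕ} (i c : Fin n) (p : Fin n → ℝ) :
    pd (fun q => q i) c p = if i = c then 1 else 0 := by
  have : fderiv ℝ (fun q : Fin n → ℝ => q i) p = ContinuousLinearMap.proj (φ := fun _ : Fin n => ℝ) i :=
    (hasFDerivAt_apply i p).fderiv
  simp [pd, this, Pi.single_apply]

lemma pd_const_mul_coord {n : ℕ} (k : ℝ) (i c : Fin n) (p : Fin n → ℝ) :
    pd (fun q => k * q i) c p = if i = c then k else 0 := by
  have h := hasFDerivAt_apply (𝕜 := ℝ) i p
  have h2 := h.const_mul k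
  rw [pd, h2.fderiv]
  simp [Pi.single_apply]

lemma hasFDerivAt_lin {n : ℕ} (α β : ℝ) (i j : Fin n) (p : Fin n → ℝ) :
    HasFDerivAt (fun q : Fin n → ℝ => α * q i + β * q j)
      (α • (ContinuousLinearMap.proj i : (Fin n → ℝ) →L[ℝ] ℝ)
        + β • (ContinuousLinearMap.proj j : (Fin n → ℝ) →L[ℝ] ℝ)) p := by
  have hi := hasFDerivAt_apply (𝕜 := ℝ) i p
  have hj := hasFDerivAt_apply (𝕜 := ℝ) j p
  exact (hi.const_mul α).add (hj.const_mul β)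

lemma pd_exp_lin {n : ℕ} (α β : ℝ) (i j : Fin n) (c : Fin n) (p : Fin n → ℝ) :
    pd (fun q => Real.exp (α * q i + β * q j)) c p
      = Real.exp (α * p i + β * p j) *
        (α * (if i = c then 1 else 0) + β * (if j = c then 1 else 0)) := by
  have h := (hasFDerivAt_lin α β i j p).exp
  rw [pd, h.fderiv]
  simp [Pi.single_apply]
  split_ifs <;> ring

lemma pd_neg {n : ℕ} (f : (Fin n → ℝ) → ℝ) (c : Fin n) (p : Fin n → ℝ) :
    pd (fun q => -f q) c p = - pd f c p := by
  simp [pd, fderiv_neg]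

/-- `L₁ = (2/m, 0, y, λz)` is a homothetic vector of the
four-dimensional decomposable metric
`g = diag(−e^{mλτ+2x}, e^{mλτ+2x}, e^{m(λ−1)τ+2x}, 1)` with constant factor `λ`. -/
theorem L1_is_HV_decomposable (m lam : ℝ) (hm : m ≠ 0) (hlam : lam ≠ 0) :
    IsCKV
      (fun p : Fin 4 → ℝ =>
        Matrix.diagonal
          ![-Real.exp (m * lam * p 0 + 2 * p 1),
            Real.exp (m * lam * p 0 + 2 * p 1),
            Real.exp (m * (lam - 1) * p 0 + 2 * p 1), 1])
      (fun p : Fin 4 → ℝ => ![2 / m, 0, p 2, lam * p 3])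
      (fun _ => lam) := by
  intro a b p
  fin_cases a <;> fin_cases b <;>
    simp [Fin.sum_univ_four, Matrix.diagonal_apply, pd_neg,
      pd_exp_lin, pd_const, pd_const_mul_coord, pd_coord, hm] <;>
    norm_num [show ((3:Fin 4):ℕ) = 3 from rfl, show ((2:Fin 4):ℕ) = 2 from rfl,
      show ((1:Fin 4):ℕ) = 1 from rfl, show ((0:Fin 4):ℕ) = 0 from rfl] <;>
    first
      | (field_simp; ring)
      | field_simp
      | ring
end

section
/- (Existence part of Proposition 1.) Let m ≠ 0 and λ be real constants and let A : ℝ → ℝ be any smooth, everywhere positive function. Consider on ℝ⁴ with coordinates (τ,x,y,z) the Bianchi III metric g_{III} with components g_ττ = −A(τ)²e^{mλτ}, g_xx = A(τ)²e^{mλτ}, g_yy = A(τ)²e^{m(λ−1)τ}, g_zz = A(τ)²e^{−2x} (all off-diagonal components zero). Then the vector field L₁ with components (2/m, 0, y, λz) is a conformal Killing vector of g_{III} with conformal factor ψ(τ,x,y,z) = (2/m)·A'(τ)/A(τ) + λ. -/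
open Real

lemma proj_hasFDerivAt {n : ℕ} (i : Fin n) (p : Fin n → ℝ) :
    HasFDerivAt (fun q : Fin n → ℝ => q i)
      (ContinuousLinearMap.proj i : (Fin n → ℝ) →L[ℝ] ℝ) p :=
  (ContinuousLinearMap.proj (R := ℝ) (φ := fun _ : Fin n => ℝ) i).hasFDerivAt

lemma pd_single {n : ℕ} (f : ℝ → ℝ) {f' : ℝ} {i : Fin n} {p : Fin n → ℝ}
    (hf : HasDerivAt f f' (p i)) (c : Fin n) :
    pd (fun q => f (q i)) c p = f' * (Pi.single c (1:ℝ) : Fin n → ℝ) i := by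
  have h : HasFDerivAt (fun q : Fin n → ℝ => f (q i))
      (f' • (ContinuousLinearMap.proj i : (Fin n → ℝ) →L[ℝ] ℝ)) p :=
    hf.comp_hasFDerivAt p (proj_hasFDerivAt i p)
  unfold pd
  rw [h.fderiv]
  simp

lemma pd_mul {n : ℕ} (f h : ℝ → ℝ) {f' h' : ℝ} {i j : Fin n} {p : Fin n → ℝ}
    (hf : HasDerivAt f f' (p i)) (hh : HasDerivAt h h' (p j)) (c : Fin n) :
    pd (fun q => f (q i) * h (q j)) c p
      = f' * (Pi.single c (1:ℝ) : Fin n → ℝ) i * h (p j)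
        + f (p i) * (h' * (Pi.single c (1:ℝ) : Fin n → ℝ) j) := by
  have h3 : HasFDerivAt (fun q : Fin n → ℝ => f (q i) * h (q j))
      (f (p i) • h' • (ContinuousLinearMap.proj j : (Fin n → ℝ) →L[ℝ] ℝ)
        + h (p j) • f' • (ContinuousLinearMap.proj i : (Fin n → ℝ) →L[ℝ] ℝ)) p :=
    (hf.comp_hasFDerivAt p (proj_hasFDerivAt i p)).mul
      (hh.comp_hasFDerivAt p (proj_hasFDerivAt j p))
  unfold pd
  rw [h3.fderiv]
  simp
  ring

set_option maxHeartbeats 1000000 in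
/-- existence part of Proposition 1: for any smooth positive `A`,
`L₁ = (2/m, 0, y, λz)` is a CKV of the Bianchi III metric
`g = diag(−A²e^{mλτ}, A²e^{mλτ}, A²e^{m(λ−1)τ}, A²e^{−2x})` with conformal factor
`ψ = (2/m)A'/A + λ`. -/
theorem L1_is_CKV_BianchiIII (m lam : ℝ) (hm : m ≠ 0)
    (A : ℝ → ℝ) (hA : ContDiff ℝ (⊤ : ℕ∞) A) (hApos : ∀ t, 0 < A t) :
    IsCKV
      (fun p : Fin 4 → ℝ =>
        Matrix.diagonal
          ![-((A (p 0)) ^ 2 * Real.exp (m * lam * p 0)),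
            (A (p 0)) ^ 2 * Real.exp (m * lam * p 0),
            (A (p 0)) ^ 2 * Real.exp (m * (lam - 1) * p 0),
            (A (p 0)) ^ 2 * Real.exp (-2 * p 1)])
      (fun p : Fin 4 → ℝ => ![2 / m, 0, p 2, lam * p 3])
      (fun p => (2 / m) * (deriv A (p 0) / A (p 0)) + lam) := by
  intro a b p
  have hAd : HasDerivAt A (deriv A (p 0)) (p 0) :=
    ((hA.differentiable (by simp)) (p 0)).hasDerivAt
  have hsq : HasDerivAt (fun t => A t ^ 2) (2 * A (p 0) * deriv A (p 0)) (p 0) := by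
    simpa using hAd.fun_pow 2
  have hlin1 : HasDerivAt (fun t => m * lam * t) (m * lam) (p 0) := by
    simpa using (hasDerivAt_id (p 0)).const_mul (m * lam)
  have hlin2 : HasDerivAt (fun t => m * (lam - 1) * t) (m * (lam - 1)) (p 0) := by
    simpa using (hasDerivAt_id (p 0)).const_mul (m * (lam - 1))
  have hlin3 : HasDerivAt (fun t => -(2 * t)) (-2 : ℝ) (p 1) := by
    simpa using ((hasDerivAt_id (p 1)).const_mul (2 : ℝ)).fun_neg
  have hF1 : HasDerivAt (fun t => A t ^ 2 * Real.exp (m * lam * t))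
      (2 * A (p 0) * deriv A (p 0) * Real.exp (m * lam * p 0)
        + A (p 0) ^ 2 * (Real.exp (m * lam * p 0) * (m * lam))) (p 0) :=
    hsq.mul hlin1.exp
  have hF2 : HasDerivAt (fun t => A t ^ 2 * Real.exp (m * (lam - 1) * t))
      (2 * A (p 0) * deriv A (p 0) * Real.exp (m * (lam - 1) * p 0)
        + A (p 0) ^ 2 * (Real.exp (m * (lam - 1) * p 0) * (m * (lam - 1)))) (p 0) :=
    hsq.mul hlin2.exp
  have hE3 : HasDerivAt (fun s => Real.exp (-(2 * s))) (Real.exp (-(2 * p 1)) * (-2)) (p 1) :=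
    hlin3.exp
  have E1 : ∀ c, pd (fun q : Fin 4 → ℝ => A (q 0) ^ 2 * Real.exp (m * lam * q 0)) c p
      = (2 * A (p 0) * deriv A (p 0) * Real.exp (m * lam * p 0)
          + A (p 0) ^ 2 * (Real.exp (m * lam * p 0) * (m * lam)))
        * (Pi.single c (1:ℝ) : Fin 4 → ℝ) 0 :=
    fun c => pd_single (f := fun t => A t ^ 2 * Real.exp (m * lam * t)) hF1 c
  have E1n : ∀ c, pd (fun q : Fin 4 → ℝ => -(A (q 0) ^ 2 * Real.exp (m * lam * q 0))) c p
      = -(2 * A (p 0) * deriv A (p 0) * Real.exp (m * lam * p 0)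
          + A (p 0) ^ 2 * (Real.exp (m * lam * p 0) * (m * lam)))
        * (Pi.single c (1:ℝ) : Fin 4 → ℝ) 0 :=
    fun c => pd_single (f := fun t => -(A t ^ 2 * Real.exp (m * lam * t))) hF1.neg c
  have E2 : ∀ c, pd (fun q : Fin 4 → ℝ => A (q 0) ^ 2 * Real.exp (m * (lam - 1) * q 0)) c p
      = (2 * A (p 0) * deriv A (p 0) * Real.exp (m * (lam - 1) * p 0)
          + A (p 0) ^ 2 * (Real.exp (m * (lam - 1) * p 0) * (m * (lam - 1))))
        * (Pi.single c (1:ℝ) : Fin 4 → ℝ) 0 :=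
    fun c => pd_single (f := fun t => A t ^ 2 * Real.exp (m * (lam - 1) * t)) hF2 c
  have E4 : ∀ c, pd (fun q : Fin 4 → ℝ => A (q 0) ^ 2 * Real.exp (-(2 * q 1))) c p
      = 2 * A (p 0) * deriv A (p 0) * (Pi.single c (1:ℝ) : Fin 4 → ℝ) 0 * Real.exp (-(2 * p 1))
        + A (p 0) ^ 2 * (Real.exp (-(2 * p 1)) * (-2) * (Pi.single c (1:ℝ) : Fin 4 → ℝ) 1) :=
    fun c => pd_mul (fun t => A t ^ 2) (fun s => Real.exp (-(2 * s))) hsq hE3 c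
  have EX2 : ∀ c, pd (fun q : Fin 4 → ℝ => q 2) c p
      = 1 * (Pi.single c (1:ℝ) : Fin 4 → ℝ) 2 :=
    fun c => pd_single (f := fun t => t) (hasDerivAt_id (p 2)) c
  have EX3 : ∀ c, pd (fun q : Fin 4 → ℝ => lam * q 3) c p
      = lam * 1 * (Pi.single c (1:ℝ) : Fin 4 → ℝ) 3 :=
    fun c => pd_single (f := fun t => lam * t) ((hasDerivAt_id (p 3)).const_mul lam) c
  have hA0 : A (p 0) ≠ 0 := (hApos (p 0)).ne'
  fin_cases a <;> fin_cases b <;>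
    (simp (config := { decide := true }) [Fin.sum_univ_four, Matrix.diagonal_apply, E1, E1n, E2, E4, EX2, EX3, pd_const,
      Pi.single_apply]
     <;> (try field_simp)
     <;> (try ring))
end

section
/- Expansion of the comoving observers in the Bianchi III spacetime: let m ≠ 0 and λ be real constants and let A : ℝ → ℝ be smooth and everywhere positive. Consider on ℝ⁴ with coordinates (τ,x,y,z) the Bianchi III metric g with components g_ττ = −A(τ)²e^{mλτ}, g_xx = A(τ)²e^{mλτ}, g_yy = A(τ)²e^{m(λ−1)τ}, g_zz = A(τ)²e^{−2x}, and the comoving velocity field u with components u = (e^{−mλτ/2}/A(τ), 0, 0, 0). Then (i) −det g = A(τ)⁸ e^{m(3λ−1)τ} e^{−2x} at every point, and (ii) the expansion θ := (1/√(−det g)) · ∂_τ( √(−det g) · u^τ ) satisfies θ(τ,x,y,z) = (e^{−mλτ/2}/A(τ)) · [ 3 A'(τ)/A(τ) + m(2λ−1)/2 ]. -/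
open Real

/-- determinant and expansion of the comoving observers in the
Bianchi III spacetime `g = diag(−A²e^{mλτ}, A²e^{mλτ}, A²e^{m(λ−1)τ}, A²e^{−2x})`
with comoving velocity `u^τ = e^{−mλτ/2}/A(τ)`. -/
theorem BianchiIII_expansion (m lam : ℝ) (hm : m ≠ 0)
    (A : ℝ → ℝ) (hA : ContDiff ℝ (⊤ : ℕ∞) A) (hApos : ∀ t, 0 < A t) :
    (∀ p : Fin 4 → ℝ,
      -(Matrix.diagonal
          ![-((A (p 0)) ^ 2 * Real.exp (m * lam * p 0)),
            (A (p 0)) ^ 2 * Real.exp (m * lam * p 0),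
            (A (p 0)) ^ 2 * Real.exp (m * (lam - 1) * p 0),
            (A (p 0)) ^ 2 * Real.exp (-2 * p 1)]).det
        = (A (p 0)) ^ 8 * Real.exp (m * (3 * lam - 1) * p 0) * Real.exp (-2 * p 1))
    ∧
    (∀ p : Fin 4 → ℝ,
      (1 / Real.sqrt
          (-(Matrix.diagonal
            ![-((A (p 0)) ^ 2 * Real.exp (m * lam * p 0)),
              (A (p 0)) ^ 2 * Real.exp (m * lam * p 0),
              (A (p 0)) ^ 2 * Real.exp (m * (lam - 1) * p 0),
              (A (p 0)) ^ 2 * Real.exp (-2 * p 1)]).det))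
        * pd (fun q : Fin 4 → ℝ =>
            Real.sqrt
              (-(Matrix.diagonal
                ![-((A (q 0)) ^ 2 * Real.exp (m * lam * q 0)),
                  (A (q 0)) ^ 2 * Real.exp (m * lam * q 0),
                  (A (q 0)) ^ 2 * Real.exp (m * (lam - 1) * q 0),
                  (A (q 0)) ^ 2 * Real.exp (-2 * q 1)]).det)
            * (Real.exp (-(m * lam * q 0) / 2) / A (q 0))) 0 p
      = (Real.exp (-(m * lam * p 0) / 2) / A (p 0))
          * (3 * (deriv A (p 0) / A (p 0)) + m * (2 * lam - 1) / 2)) := by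

  have hAne : ∀ t, A t ≠ 0 := fun t => (hApos t).ne'
  -- determinant computation
  have hdet : ∀ p : Fin 4 → ℝ,
      -(Matrix.diagonal
          ![-((A (p 0)) ^ 2 * Real.exp (m * lam * p 0)),
            (A (p 0)) ^ 2 * Real.exp (m * lam * p 0),
            (A (p 0)) ^ 2 * Real.exp (m * (lam - 1) * p 0),
            (A (p 0)) ^ 2 * Real.exp (-2 * p 1)]).det
        = (A (p 0)) ^ 8 * Real.exp (m * (3 * lam - 1) * p 0) * Real.exp (-2 * p 1) := by
    intro p
    rw [Matrix.det_diagonal, Fin.prod_univ_four]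
    simp only [Matrix.cons_val_zero, Matrix.cons_val_one, Matrix.head_cons,
      Matrix.cons_val_two, Matrix.tail_cons, Matrix.cons_val_three]
    rw [show m * (3 * lam - 1) * p 0
        = m * lam * p 0 + (m * lam * p 0 + m * (lam - 1) * p 0) by ring,
      Real.exp_add, Real.exp_add]
    ring
  refine ⟨hdet, fun p => ?_⟩
  -- sqrt computation
  have hsqrt : ∀ q : Fin 4 → ℝ,
      Real.sqrt ((A (q 0)) ^ 8 * Real.exp (m * (3 * lam - 1) * q 0) * Real.exp (-2 * q 1))
        = (A (q 0)) ^ 4 * Real.exp (m * (3 * lam - 1) * q 0 / 2) * Real.exp (- q 1) := by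
    intro q
    have h : (A (q 0)) ^ 8 * Real.exp (m * (3 * lam - 1) * q 0) * Real.exp (-2 * q 1)
        = ((A (q 0)) ^ 4 * Real.exp (m * (3 * lam - 1) * q 0 / 2) * Real.exp (- q 1)) ^ 2 := by
      rw [show m * (3 * lam - 1) * q 0
          = m * (3 * lam - 1) * q 0 / 2 + m * (3 * lam - 1) * q 0 / 2 by ring,
        show (-2 : ℝ) * q 1 = -q 1 + -q 1 by ring, Real.exp_add, Real.exp_add]
      ring
    rw [h, Real.sqrt_sq (by positivity)]
  set c : ℝ := m * (2 * lam - 1) / 2 with hc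
  -- the function inside pd
  have hfun : (fun q : Fin 4 → ℝ =>
        Real.sqrt
          (-(Matrix.diagonal
            ![-((A (q 0)) ^ 2 * Real.exp (m * lam * q 0)),
              (A (q 0)) ^ 2 * Real.exp (m * lam * q 0),
              (A (q 0)) ^ 2 * Real.exp (m * (lam - 1) * q 0),
              (A (q 0)) ^ 2 * Real.exp (-2 * q 1)]).det)
          * (Real.exp (-(m * lam * q 0) / 2) / A (q 0)))
      = fun q : Fin 4 → ℝ => (A (q 0)) ^ 3 * Real.exp (c * q 0) * Real.exp (- q 1) := by
    funext q
    rw [hdet q, hsqrt q]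
    rw [show c * q 0 = m * (3 * lam - 1) * q 0 / 2 + -(m * lam * q 0) / 2 by rw [hc]; ring,
      Real.exp_add]
    have h := hAne (q 0)
    field_simp
  -- derivative of F t = A t ^ 3 * exp (c * t)
  have hAd : ∀ t, HasDerivAt A (deriv A t) t :=
    fun t => ((hA.differentiable (by simp)) t).hasDerivAt
  have hF : ∀ t, HasDerivAt (fun t => A t ^ 3 * Real.exp (c * t))
      (3 * A t ^ 2 * deriv A t * Real.exp (c * t) + A t ^ 3 * (Real.exp (c * t) * c)) t := by
    intro t
    have h1 : HasDerivAt (fun t => A t ^ 3) (3 * A t ^ 2 * deriv A t) t := by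
      have := (hAd t).pow 3
      exact this.congr_deriv (by norm_num)
    have h2 : HasDerivAt (fun t => Real.exp (c * t)) (Real.exp (c * t) * c) t := by
      have := ((hasDerivAt_id t).const_mul c).exp
      simpa using this
    have := h1.mul h2
    exact this.congr_deriv (by ring)
  -- fderiv of the 4D function
  set F : ℝ → ℝ := fun t => A t ^ 3 * Real.exp (c * t) with hFdef
  set F' : ℝ → ℝ := fun t =>
    3 * A t ^ 2 * deriv A t * Real.exp (c * t) + A t ^ 3 * (Real.exp (c * t) * c) with hF'def
  have hfd : ∀ q : Fin 4 → ℝ,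
      HasFDerivAt (fun q : Fin 4 → ℝ => F (q 0) * Real.exp (- q 1))
        (F (q 0) • ((-Real.exp (- q 1)) • (ContinuousLinearMap.proj 1 :
            (Fin 4 → ℝ) →L[ℝ] ℝ))
          + Real.exp (- q 1) • ((F' (q 0)) • (ContinuousLinearMap.proj 0 :
            (Fin 4 → ℝ) →L[ℝ] ℝ))) q := by
    intro q
    have h0 : HasFDerivAt (fun q : Fin 4 → ℝ => F (q 0))
        ((F' (q 0)) • (ContinuousLinearMap.proj 0 : (Fin 4 → ℝ) →L[ℝ] ℝ)) q := by
      have := (hF (q 0)).comp_hasFDerivAt q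
        (ContinuousLinearMap.proj 0 : (Fin 4 → ℝ) →L[ℝ] ℝ).hasFDerivAt
      exact this
    have h1 : HasFDerivAt (fun q : Fin 4 → ℝ => Real.exp (- q 1))
        ((-Real.exp (- q 1)) • (ContinuousLinearMap.proj 1 : (Fin 4 → ℝ) →L[ℝ] ℝ)) q := by
      have hg : HasDerivAt (fun s : ℝ => Real.exp (-s)) (-Real.exp (- q 1)) (q 1) := by
        have := ((hasDerivAt_id (q 1)).neg).exp
        simpa using this
      exact hg.comp_hasFDerivAt q
        (ContinuousLinearMap.proj 1 : (Fin 4 → ℝ) →L[ℝ] ℝ).hasFDerivAt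
    exact h0.mul h1
  have hpd : pd (fun q : Fin 4 → ℝ => F (q 0) * Real.exp (- q 1)) 0 p
      = Real.exp (- p 1) * F' (p 0) := by
    rw [pd, (hfd p).fderiv]
    simp [ContinuousLinearMap.proj, Pi.single_apply]
  rw [hfun, hdet p, hsqrt p]
  rw [show (fun q : Fin 4 → ℝ => (A (q 0)) ^ 3 * Real.exp (c * q 0) * Real.exp (- q 1))
      = fun q : Fin 4 → ℝ => F (q 0) * Real.exp (- q 1) from rfl, hpd]
  have he1 : Real.exp (m * (3 * lam - 1) * p 0 / 2)
      = Real.exp (c * p 0) * (Real.exp (-(m * lam * p 0) / 2))⁻¹ := by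
    rw [← Real.exp_neg, ← Real.exp_add]
    congr 1
    rw [hc]; ring
  rw [he1]
  simp only [hF'def, hFdef]
  have h1 := hAne (p 0)
  have h2 := Real.exp_ne_zero (c * p 0)
  have h3 := Real.exp_ne_zero (- p 1)
  have h4 := Real.exp_ne_zero (-(m * lam * p 0) / 2)
  field_simp
end

section
/- Lie point symmetry of the wave equation in the homothetic Bianchi III spacetime: let m ≠ 0, λ, κ be real constants. Suppose u : ℝ⁴ → ℝ is a smooth function of (t,x,y,z) satisfying the wave equation −u_tt + u_xx + e^{mt}u_yy + e^{mλt+2x}u_zz + (m/2)(λ−2κ+1)u_t − u_x = 0 at every point of ℝ⁴. Then for every real ε the function v(t,x,y,z) := u(t − 2ε/m, x, e^{−ε}y, e^{−λε}z) also satisfies the same equation at every point; i.e. the one-parameter point transformation generated by (2/m)∂_t + y∂_y + λz∂_z maps solutions to solutions. -/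
open Real

lemma pd_smooth {n : ℕ} {f : (Fin n → ℝ) → ℝ} (hf : ContDiff ℝ (⊤ : ℕ∞) f) (c : Fin n) :
    ContDiff ℝ (⊤ : ℕ∞) (pd f c) := by
  exact (hf.fderiv_right (m := (⊤ : ℕ∞)) (by simp)).clm_apply contDiff_const

lemma aff_eq {n : ℕ} (s b : Fin n → ℝ) (q : Fin n → ℝ) :
    (fun i => s i * q i + b i) =
      (ContinuousLinearMap.pi (fun i => s i • ContinuousLinearMap.proj i) :
        (Fin n → ℝ) →L[ℝ] (Fin n → ℝ)) q + b := by
  funext i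
  simp [ContinuousLinearMap.pi_apply, ContinuousLinearMap.proj_apply]

lemma pd_comp {n : ℕ} {f : (Fin n → ℝ) → ℝ} (hf : Differentiable ℝ f) (s b : Fin n → ℝ)
    (c : Fin n) (p : Fin n → ℝ) :
    pd (fun q => f (fun i => s i * q i + b i)) c p
      = s c * pd f c (fun i => s i * p i + b i) := by
  set L : (Fin n → ℝ) →L[ℝ] (Fin n → ℝ) :=
    ContinuousLinearMap.pi (fun i => s i • ContinuousLinearMap.proj i) with hLdef
  have hT : HasFDerivAt (fun q => L q + b) L p := L.hasFDerivAt.add_const b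
  have h2 : HasFDerivAt (fun q => f (L q + b)) ((fderiv ℝ f (L p + b)).comp L) p :=
    (hf (L p + b)).hasFDerivAt.comp p hT
  have hfun : (fun q => f (fun i => s i * q i + b i)) = fun q => f (L q + b) := by
    funext q; rw [aff_eq s b q]
  have hsingle : L (Pi.single c (1:ℝ)) = s c • (Pi.single c (1:ℝ) : Fin n → ℝ) := by
    funext i
    by_cases h : i = c <;>
      simp [hLdef, ContinuousLinearMap.pi_apply, ContinuousLinearMap.proj_apply,
        Pi.single_apply, h]
  rw [pd, hfun, h2.fderiv, ContinuousLinearMap.comp_apply, hsingle, map_smul,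
    smul_eq_mul, pd, aff_eq s b p]

lemma pd_const_mul {n : ℕ} {g : (Fin n → ℝ) → ℝ} (a : ℝ) (c : Fin n) (p : Fin n → ℝ)
    (hg : DifferentiableAt ℝ g p) :
    pd (fun q => a * g q) c p = a * pd g c p := by
  rw [pd, fderiv_const_mul hg]; simp [pd]

lemma pd2_comp {n : ℕ} {f : (Fin n → ℝ) → ℝ} (hf : ContDiff ℝ (⊤ : ℕ∞) f) (s b : Fin n → ℝ)
    (c : Fin n) (p : Fin n → ℝ) :
    pd (pd (fun q => f (fun i => s i * q i + b i)) c) c p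
      = s c * s c * pd (pd f c) c (fun i => s i * p i + b i) := by
  have h1 : pd (fun q => f (fun i => s i * q i + b i)) c
      = fun p => s c * pd f c (fun i => s i * p i + b i) :=
    funext (pd_comp (hf.differentiable (by simp)) s b c)
  have hinner : Differentiable ℝ (fun q : Fin n → ℝ => (fun i => s i * q i + b i)) := by
    have : (fun q : Fin n → ℝ => (fun i => s i * q i + b i)) =
        fun q => (ContinuousLinearMap.pi (fun i => s i • ContinuousLinearMap.proj i) :
          (Fin n → ℝ) →L[ℝ] (Fin n → ℝ)) q + b := by
      funext q; exact aff_eq s b q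
    rw [this]
    exact ((ContinuousLinearMap.pi (fun i => s i • ContinuousLinearMap.proj i) :
      (Fin n → ℝ) →L[ℝ] (Fin n → ℝ)).differentiable).add_const b
  have hg : DifferentiableAt ℝ (fun q : Fin n → ℝ => pd f c (fun i => s i * q i + b i)) p :=
    (((pd_smooth hf c).differentiable (by simp)).comp hinner) p
  rw [h1, pd_const_mul _ _ _ hg, pd_comp ((pd_smooth hf c).differentiable (by simp)) s b c p]
  ring

/-- the one-parameter point transformation generated by
`(2/m)∂_t + y∂_y + λz∂_z` maps solutions of the wave equation
`−u_tt + u_xx + e^{mt}u_yy + e^{mλt+2x}u_zz + (m/2)(λ−2κ+1)u_t − u_x = 0`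
in the homothetic Bianchi III spacetime to solutions. -/
theorem BianchiIII_wave_Lie_symmetry (m lam kap : ℝ) (hm : m ≠ 0)
    (u : (Fin 4 → ℝ) → ℝ) (hu : ContDiff ℝ (⊤ : ℕ∞) u)
    (hwave : ∀ p : Fin 4 → ℝ,
      -(pd (pd u 0) 0 p) + pd (pd u 1) 1 p
        + Real.exp (m * p 0) * pd (pd u 2) 2 p
        + Real.exp (m * lam * p 0 + 2 * p 1) * pd (pd u 3) 3 p
        + (m / 2) * (lam - 2 * kap + 1) * pd u 0 p - pd u 1 p = 0) :
    ∀ ε : ℝ,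
      ∀ p : Fin 4 → ℝ,
        (fun v : (Fin 4 → ℝ) → ℝ =>
          -(pd (pd v 0) 0 p) + pd (pd v 1) 1 p
            + Real.exp (m * p 0) * pd (pd v 2) 2 p
            + Real.exp (m * lam * p 0 + 2 * p 1) * pd (pd v 3) 3 p
            + (m / 2) * (lam - 2 * kap + 1) * pd v 0 p - pd v 1 p)
          (fun q => u ![q 0 - 2 * ε / m, q 1,
            Real.exp (-ε) * q 2, Real.exp (-(lam * ε)) * q 3]) = 0 := by

  intro ε p
  set s : Fin 4 → ℝ := ![1, 1, Real.exp (-ε), Real.exp (-(lam * ε))] with hs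
  set b : Fin 4 → ℝ := ![-(2 * ε / m), 0, 0, 0] with hb
  have hrep : (fun q : Fin 4 → ℝ => u ![q 0 - 2 * ε / m, q 1,
      Real.exp (-ε) * q 2, Real.exp (-(lam * ε)) * q 3])
      = fun q => u (fun i => s i * q i + b i) := by
    funext q; congr 1; funext i
    fin_cases i <;> simp [hs, hb] <;> ring
  simp only [hrep]
  set P : Fin 4 → ℝ := fun i => s i * p i + b i with hP
  have hP0 : P 0 = p 0 - 2 * ε / m := by simp [hP, hs, hb, sub_eq_add_neg]
  have hP1 : P 1 = p 1 := by simp [hP, hs, hb]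
  have h1 := pd_comp (hu.differentiable (by simp)) s b 0 p
  have h1x := pd_comp (hu.differentiable (by simp)) s b 1 p
  have h20 := pd2_comp hu s b 0 p
  have h21 := pd2_comp hu s b 1 p
  have h22 := pd2_comp hu s b 2 p
  have h23 := pd2_comp hu s b 3 p
  rw [h1, h1x, h20, h21, h22, h23]
  have hw := hwave P
  have hs0 : s 0 = 1 := by simp [hs]
  have hs1 : s 1 = 1 := by simp [hs]
  have hs2 : s 2 = Real.exp (-ε) := by simp [hs]
  have hs3 : s 3 = Real.exp (-(lam * ε)) := by simp [hs]
  have he2 : Real.exp (m * p 0) * (s 2 * s 2) = Real.exp (m * P 0) := by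
    rw [hs2, hP0, ← Real.exp_add, ← Real.exp_add]
    congr 1
    field_simp
    ring
  have he3 : Real.exp (m * lam * p 0 + 2 * p 1) * (s 3 * s 3)
      = Real.exp (m * lam * P 0 + 2 * P 1) := by
    rw [hs3, hP0, hP1, ← Real.exp_add, ← Real.exp_add]
    congr 1
    field_simp
    ring
  rw [hs0, hs1]
  calc -(1 * 1 * pd (pd u 0) 0 P) + 1 * 1 * pd (pd u 1) 1 P
        + Real.exp (m * p 0) * (s 2 * s 2 * pd (pd u 2) 2 P)
        + Real.exp (m * lam * p 0 + 2 * p 1) * (s 3 * s 3 * pd (pd u 3) 3 P)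
        + m / 2 * (lam - 2 * kap + 1) * (1 * pd u 0 P) - 1 * pd u 1 P
      = -(pd (pd u 0) 0 P) + pd (pd u 1) 1 P
        + (Real.exp (m * p 0) * (s 2 * s 2)) * pd (pd u 2) 2 P
        + (Real.exp (m * lam * p 0 + 2 * p 1) * (s 3 * s 3)) * pd (pd u 3) 3 P
        + m / 2 * (lam - 2 * kap + 1) * pd u 0 P - pd u 1 P := by ring
    _ = 0 := by rw [he2, he3]; exact hw
end
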